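/- arXiv:2602.03192 — 3 statements merged into one kernel-verified Lean document; each statement's English description precedes it below -/
import Mathlib

section
/- For λ ∈ ℂ with Im λ < 0, there exists a nontrivial outgoing solution ψ ∈ ℂ^A of Uψ = e^{−iλ}ψ (i.e., a solution with ψ(a_{j,k}^♭) = 0 for all k ≥ 0 and all j) if and only if e^{−iλ} is an eigenvalue of the finite matrix E = χ_int U χ_int*. -/
/-!
Outside `Aint`, an outgoing solution of `U ψ = μ ψ` is forced: it vanishes on the incoming
tails, the free walk gives `ψ (a_{j,l+1}^♯) = μ⁻¹ ψ (a_{j,l}^♯)` on the outgoing tails, and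
`ψ (a_{j,1}^♯) = μ⁻¹ (U ψ)(a_{j,1}^♯)` depends only on the internal values. Hence restriction
to `Aint` is a bijection between outgoing eigenvectors of `U` and eigenvectors of `E`.
-/

open Function

section OutgoingSolutions

variable {A : Type*} {N : ℕ} {Aint : Finset A} {flat sharp : Fin N → ℕ → A}
  {U : (A → ℂ) →ₗ[ℂ] (A → ℂ)} {E : (↥Aint → ℂ) →ₗ[ℂ] (↥Aint → ℂ)} {μ : ℂ}

variable (Aint flat sharp U) in
def CoreLocal : Prop :=
  ∀ ψ φ : A → ℂ, (∀ a ∈ Aint, ψ a = φ a) → (∀ j, ψ (flat j 0) = φ (flat j 0)) →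
    (∀ a ∈ Aint, U ψ a = U φ a) ∧ (∀ j, U ψ (sharp j 0) = U φ (sharp j 0))

lemma eq_zero_on_sharp_of_eq_zero_on_int (hμ : μ ≠ 0)
    (hUsharp : ∀ (ψ : A → ℂ) (j : Fin N) (l : ℕ), U ψ (sharp j (l + 1)) = ψ (sharp j l))
    (hlocal : CoreLocal Aint flat sharp U)
    {ψ : A → ℂ} (hout : ∀ j k, ψ (flat j k) = 0) (heig : U ψ = μ • ψ)
    (hint : ∀ a ∈ Aint, ψ a = 0) (j : Fin N) (l : ℕ) : ψ (sharp j l) = 0 := by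
  have heig_at (a : A) : μ * ψ a = U ψ a := (congrFun heig a).symm
  induction l with
  | zero =>
    have hU0 : U ψ (sharp j 0) = U 0 (sharp j 0) := (hlocal ψ 0 hint (fun j => hout j 0)).2 j
    simpa [hμ, hU0] using heig_at (sharp j 0)
  | succ l ih => simpa [hμ, hUsharp, ih] using heig_at (sharp j (l + 1))

lemma eq_zero_of_eq_zero_on_int (hμ : μ ≠ 0)
    (hcover : ∀ a : A, a ∉ Aint → (∃ j k, a = flat j k) ∨ (∃ j l, a = sharp j l))
    (hUsharp : ∀ (ψ : A → ℂ) (j : Fin N) (l : ℕ), U ψ (sharp j (l + 1)) = ψ (sharp j l))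
    (hlocal : CoreLocal Aint flat sharp U)
    {ψ : A → ℂ} (hout : ∀ j k, ψ (flat j k) = 0) (heig : U ψ = μ • ψ)
    (hint : ∀ a ∈ Aint, ψ a = 0) : ψ = 0 := by
  funext a
  by_cases ha : a ∈ Aint
  · exact hint a ha
  · rcases hcover a ha with ⟨j, k, rfl⟩ | ⟨j, l, rfl⟩
    · exact hout j k
    · exact eq_zero_on_sharp_of_eq_zero_on_int hμ hUsharp hlocal hout heig hint j l

variable [DecidableEq A]

def zeroExtend (s : Finset A) (u : s → ℂ) : A → ℂ :=
  fun b => if h : b ∈ s then u ⟨b, h⟩ else 0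

lemma zeroExtend_of_mem {s : Finset A} (u : s → ℂ) {b : A} (h : b ∈ s) :
    zeroExtend s u b = u ⟨b, h⟩ :=
  dif_pos h

lemma zeroExtend_of_notMem {s : Finset A} (u : s → ℂ) {b : A} (h : b ∉ s) :
    zeroExtend s u b = 0 :=
  dif_neg h

lemma compression_restrict_eq_smul
    (hdisj_flat : ∀ j k, flat j k ∉ Aint)
    (hlocal : CoreLocal Aint flat sharp U)
    (hE : ∀ (u : ↥Aint → ℂ) (a : ↥Aint), E u a = U (zeroExtend Aint u) a)
    {ψ : A → ℂ} (hout : ∀ j k, ψ (flat j k) = 0) (heig : U ψ = μ • ψ) :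
    E (ψ ∘ (↑)) = μ • (ψ ∘ (↑)) := by
  have hflat0 : ∀ j, zeroExtend Aint (ψ ∘ (↑)) (flat j 0) = ψ (flat j 0) := fun j => by
    rw [zeroExtend_of_notMem _ (hdisj_flat j 0), hout]
  funext a
  rw [hE, (hlocal _ ψ (fun _ ha => zeroExtend_of_mem _ ha) hflat0).1 a a.2, heig]
  rfl

variable (Aint sharp U μ) in
noncomputable def outgoingExtension (u : ↥Aint → ℂ) : A → ℂ :=
  extend (fun q : Fin N × ℕ => sharp q.1 q.2)
    (fun q => μ⁻¹ ^ (q.2 + 1) * U (zeroExtend Aint u) (sharp q.1 0)) (zeroExtend Aint u)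

lemma outgoingExtension_sharp
    (hinj : Injective (Sum.elim (fun q : Fin N × ℕ => flat q.1 q.2)
      (fun q : Fin N × ℕ => sharp q.1 q.2))) (u : ↥Aint → ℂ) (j : Fin N) (l : ℕ) :
    outgoingExtension Aint sharp U μ u (sharp j l) =
      μ⁻¹ ^ (l + 1) * U (zeroExtend Aint u) (sharp j 0) :=
  (hinj.comp Sum.inr_injective).extend_apply _ _ (j, l)

lemma outgoingExtension_of_notMem_range {u : ↥Aint → ℂ} {a : A} (ha : ∀ j l, sharp j l ≠ a) :
    outgoingExtension Aint sharp U μ u a = zeroExtend Aint u a :=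
  extend_apply' _ _ _ fun ⟨q, hq⟩ => ha q.1 q.2 hq

lemma outgoingExtension_of_mem (hdisj_sharp : ∀ j l, sharp j l ∉ Aint) (u : ↥Aint → ℂ)
    {a : A} (ha : a ∈ Aint) : outgoingExtension Aint sharp U μ u a = u ⟨a, ha⟩ := by
  rw [outgoingExtension_of_notMem_range fun j l (h : sharp j l = a) => hdisj_sharp j l (h ▸ ha),
    zeroExtend_of_mem _ ha]

lemma outgoingExtension_flat
    (hinj : Injective (Sum.elim (fun q : Fin N × ℕ => flat q.1 q.2)
      (fun q : Fin N × ℕ => sharp q.1 q.2))) (hdisj_flat : ∀ j k, flat j k ∉ Aint) (u : ↥Aint → ℂ)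
    (j : Fin N) (k : ℕ) : outgoingExtension Aint sharp U μ u (flat j k) = 0 := by
  rw [outgoingExtension_of_notMem_range fun j' l (h : sharp j' l = flat j k) =>
      hinj.ne (a₁ := .inl (j, k)) (a₂ := .inr (j', l)) Sum.inl_ne_inr h.symm,
    zeroExtend_of_notMem _ (hdisj_flat j k)]

lemma outgoingExtension_eq_smul (hμ : μ ≠ 0)
    (hdisj_flat : ∀ j k, flat j k ∉ Aint)
    (hdisj_sharp : ∀ j l, sharp j l ∉ Aint)
    (hinj : Injective (Sum.elim (fun q : Fin N × ℕ => flat q.1 q.2)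
      (fun q : Fin N × ℕ => sharp q.1 q.2)))
    (hcover : ∀ a : A, a ∉ Aint → (∃ j k, a = flat j k) ∨ (∃ j l, a = sharp j l))
    (hUflat : ∀ (ψ : A → ℂ) (j : Fin N) (k : ℕ), U ψ (flat j k) = ψ (flat j (k + 1)))
    (hUsharp : ∀ (ψ : A → ℂ) (j : Fin N) (l : ℕ), U ψ (sharp j (l + 1)) = ψ (sharp j l))
    (hlocal : CoreLocal Aint flat sharp U)
    (hE : ∀ (u : ↥Aint → ℂ) (a : ↥Aint), E u a = U (zeroExtend Aint u) a)
    {u : ↥Aint → ℂ} (hu : E u = μ • u) :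
    U (outgoingExtension Aint sharp U μ u) = μ • outgoingExtension Aint sharp U μ u := by
  set ψ := outgoingExtension Aint sharp U μ u
  have hint : ∀ a (ha : a ∈ Aint), ψ a = u ⟨a, ha⟩ :=
    fun _ ha => outgoingExtension_of_mem hdisj_sharp u ha
  have hflat : ∀ j k, ψ (flat j k) = 0 := outgoingExtension_flat hinj hdisj_flat u
  have hsharp : ∀ j l, ψ (sharp j l) = μ⁻¹ ^ (l + 1) * U (zeroExtend Aint u) (sharp j 0) :=
    outgoingExtension_sharp hinj u
  have hlocal_ψ := hlocal ψ (zeroExtend Aint u)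
    (fun a ha => by rw [hint a ha, zeroExtend_of_mem])
    (fun j => by rw [hflat, zeroExtend_of_notMem _ (hdisj_flat j 0)])
  funext a
  change U ψ a = μ * ψ a
  by_cases ha : a ∈ Aint
  · rw [hlocal_ψ.1 a ha, ← hE u ⟨a, ha⟩, hu, hint a ha]
    rfl
  rcases hcover a ha with ⟨j, k, rfl⟩ | ⟨j, _ | l, rfl⟩
  · rw [hUflat, hflat, hflat, mul_zero]
  · rw [hlocal_ψ.2 j, hsharp, zero_add, pow_one, mul_inv_cancel_left₀ hμ]
  · rw [hUsharp, hsharp, hsharp, pow_succ' μ⁻¹ (l + 1), mul_assoc, mul_inv_cancel_left₀ hμ]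

theorem exists_outgoing_eigenvector_iff (hμ : μ ≠ 0)
    (hdisj_flat : ∀ j k, flat j k ∉ Aint)
    (hdisj_sharp : ∀ j l, sharp j l ∉ Aint)
    (hinj : Injective (Sum.elim (fun q : Fin N × ℕ => flat q.1 q.2)
      (fun q : Fin N × ℕ => sharp q.1 q.2)))
    (hcover : ∀ a : A, a ∉ Aint → (∃ j k, a = flat j k) ∨ (∃ j l, a = sharp j l))
    (hUflat : ∀ (ψ : A → ℂ) (j : Fin N) (k : ℕ), U ψ (flat j k) = ψ (flat j (k + 1)))
    (hUsharp : ∀ (ψ : A → ℂ) (j : Fin N) (l : ℕ), U ψ (sharp j (l + 1)) = ψ (sharp j l))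
    (hlocal : CoreLocal Aint flat sharp U)
    (hE : ∀ (u : ↥Aint → ℂ) (a : ↥Aint), E u a = U (zeroExtend Aint u) a) :
    (∃ ψ : A → ℂ, ψ ≠ 0 ∧ (∀ j k, ψ (flat j k) = 0) ∧ U ψ = μ • ψ) ↔
      ∃ u : ↥Aint → ℂ, u ≠ 0 ∧ E u = μ • u := by
  constructor
  · rintro ⟨ψ, hψ, hout, heig⟩
    refine ⟨ψ ∘ (↑), fun hzero => hψ ?_,
      compression_restrict_eq_smul hdisj_flat hlocal hE hout heig⟩
    exact eq_zero_of_eq_zero_on_int hμ hcover hUsharp hlocal hout heig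
      fun a ha => congrFun hzero ⟨a, ha⟩
  · rintro ⟨u, hu, heig⟩
    refine ⟨outgoingExtension Aint sharp U μ u, fun hzero => hu ?_,
      outgoingExtension_flat hinj hdisj_flat u,
      outgoingExtension_eq_smul hμ hdisj_flat hdisj_sharp hinj hcover hUflat hUsharp hlocal hE heig⟩
    funext a
    rw [← outgoingExtension_of_mem hdisj_sharp u a.2, hzero, Pi.zero_apply, Pi.zero_apply]

end OutgoingSolutions

theorem outgoing_solution_iff_eigenvalue_of_E_general
    {A : Type*} [DecidableEq A] (N : ℕ) (Aint : Finset A)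
    (flat sharp : Fin N → ℕ → A)
    (hdisj_flat : ∀ j k, flat j k ∉ Aint)
    (hdisj_sharp : ∀ j l, sharp j l ∉ Aint)
    (hinj : Function.Injective
      (Sum.elim (fun q : Fin N × ℕ => flat q.1 q.2)
                (fun q : Fin N × ℕ => sharp q.1 q.2)))
    (hcover : ∀ a : A, a ∉ Aint → (∃ j k, a = flat j k) ∨ (∃ j l, a = sharp j l))
    (U : (A → ℂ) →ₗ[ℂ] (A → ℂ))
    (hUflat : ∀ (ψ : A → ℂ) (j : Fin N) (k : ℕ), U ψ (flat j k) = ψ (flat j (k + 1)))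
    (hUsharp : ∀ (ψ : A → ℂ) (j : Fin N) (l : ℕ), U ψ (sharp j (l + 1)) = ψ (sharp j l))
    (hlocal : ∀ ψ φ : A → ℂ, (∀ a ∈ Aint, ψ a = φ a) → (∀ j, ψ (flat j 0) = φ (flat j 0)) →
      (∀ a ∈ Aint, U ψ a = U φ a) ∧ (∀ j, U ψ (sharp j 0) = U φ (sharp j 0)))
    (E : (↥Aint → ℂ) →ₗ[ℂ] (↥Aint → ℂ))
    (hE : ∀ (u : ↥Aint → ℂ) (a : ↥Aint),
      E u a = U (fun b => if h : b ∈ Aint then u ⟨b, h⟩ else 0) a)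
    (lam : ℂ) :
    (∃ ψ : A → ℂ, ψ ≠ 0 ∧ (∀ j k, ψ (flat j k) = 0) ∧
        U ψ = Complex.exp (-(Complex.I * lam)) • ψ) ↔
    (∃ u : ↥Aint → ℂ, u ≠ 0 ∧ E u = Complex.exp (-(Complex.I * lam)) • u) :=
  exists_outgoing_eigenvector_iff (Complex.exp_ne_zero _) hdisj_flat hdisj_sharp hinj hcover
    hUflat hUsharp hlocal hE

/-- For `λ ∈ ℂ` with `Im λ < 0`, there exists a nontrivial outgoing
solution `ψ ∈ ℂ^A` of `Uψ = e^{−iλ}ψ` (i.e. `ψ` vanishes on all incoming tail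
edges `a_{j,k}^♭`) if and only if `e^{−iλ}` is an eigenvalue of the finite
matrix `E = χ_int U χ_int*`.

Setup: `Aint` is the finite internal edge set, `flat j k = a_{j,k}^♭` (k ≥ 0),
`sharp j l = a_{j,l+1}^♯` (enumerating the outgoing edges `a_{j,l}^♯`, l ≥ 1);
the tail edges are pairwise distinct and disjoint from `Aint`, every edge is
internal or a tail edge, `U` satisfies the free-walk relations (Assumption 1)
on tails, and the value of `Uψ` on internal edges and on the first outgoing
edges `a_{j,1}^♯` depends only on `ψ` restricted to `Aint ∪ {a_{j,0}^♭}`.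
`E` is the compression of `U` to `ℂ^{Aint}`. -/
theorem outgoing_solution_iff_eigenvalue_of_E
    {A : Type*} [DecidableEq A] (N : ℕ) (Aint : Finset A)
    (flat sharp : Fin N → ℕ → A)
    (hdisj_flat : ∀ j k, flat j k ∉ Aint)
    (hdisj_sharp : ∀ j l, sharp j l ∉ Aint)
    (hinj : Function.Injective
      (Sum.elim (fun q : Fin N × ℕ => flat q.1 q.2)
                (fun q : Fin N × ℕ => sharp q.1 q.2)))
    (hcover : ∀ a : A, a ∉ Aint → (∃ j k, a = flat j k) ∨ (∃ j l, a = sharp j l))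
    (U : (A → ℂ) →ₗ[ℂ] (A → ℂ))
    (hUflat : ∀ (ψ : A → ℂ) (j : Fin N) (k : ℕ), U ψ (flat j k) = ψ (flat j (k + 1)))
    (hUsharp : ∀ (ψ : A → ℂ) (j : Fin N) (l : ℕ), U ψ (sharp j (l + 1)) = ψ (sharp j l))
    (hlocal : ∀ ψ φ : A → ℂ, (∀ a ∈ Aint, ψ a = φ a) → (∀ j, ψ (flat j 0) = φ (flat j 0)) →
      (∀ a ∈ Aint, U ψ a = U φ a) ∧ (∀ j, U ψ (sharp j 0) = U φ (sharp j 0)))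
    (E : (↥Aint → ℂ) →ₗ[ℂ] (↥Aint → ℂ))
    (hE : ∀ (u : ↥Aint → ℂ) (a : ↥Aint),
      E u a = U (fun b => if h : b ∈ Aint then u ⟨b, h⟩ else 0) a)
    (lam : ℂ) (hlam : lam.im < 0) :
    (∃ ψ : A → ℂ, ψ ≠ 0 ∧ (∀ j k, ψ (flat j k) = 0) ∧
        U ψ = Complex.exp (-(Complex.I * lam)) • ψ) ↔
    (∃ u : ↥Aint → ℂ, u ≠ 0 ∧ E u = Complex.exp (-(Complex.I * lam)) • u) :=
  outgoing_solution_iff_eigenvalue_of_E_general N Aint flat sharp hdisj_flat hdisj_sharp hinj hcover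
    U hUflat hUsharp hlocal E hE lam
end

section
/- Under the quantum-walk setup, the scattering map is unitary: if ψ ∈ ℓ^∞(A) solves Uψ = e^{−iλ}ψ with incoming data α^♭ = (ψ(a_{1,0}^♭),…,ψ(a_{N,0}^♭)) and outgoing data α^♯(λ) = (ψ(a_{1,1}^♯),…,ψ(a_{N,1}^♯)), then ‖α^♭‖_{ℂᴺ} = ‖α^♯(λ)‖_{ℂᴺ}. -/
/-!
Apply conservation of the `ℓ²`-norm to `1_{Ω^♭} ψ`. By the intertwining identity and the
eigenvalue equation its image is `c • 1_{Ω^♯} ψ` with `‖c‖ = 1`, so `1_{Ω^♭} ψ` and `1_{Ω^♯} ψ`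
have the same `ℓ²`-mass. Each mass is the internal mass `∑_{A_int} ‖ψ‖²` plus `‖α^♭‖²`,
resp. `‖α^♯‖²`, and the internal mass cancels.
-/

open Function Set

theorem tsum_indicator_union_range {α ι M : Type*} [AddCommMonoid M] [TopologicalSpace M]
    [Fintype ι] (s : Finset α) {f : ι → α} (hf : Injective f) (hfs : ∀ i, f i ∉ s)
    (g : α → M) :
    ∑' a, (↑s ∪ range f).indicator g a = ∑ a ∈ s, g a + ∑ i, g (f i) := by
  have hdisj : Disjoint s (Finset.univ.map ⟨f, hf⟩) := by
    simpa [Finset.disjoint_right] using hfs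
  have hcoe : (↑(s.disjUnion _ hdisj) : Set α) = ↑s ∪ range f := by simp
  rw [← hcoe, ← tsum_subtype]
  refine (Finset.tsum_subtype _ g).trans ?_
  rw [Finset.sum_disjUnion, Finset.sum_map]
  rfl

theorem scattering_matrix_unitary_general
    {A : Type*} (N : ℕ) (Aint : Finset A)
    (flat0 sharp1 : Fin N → A)
    (hflat_inj : Function.Injective flat0) (hsharp_inj : Function.Injective sharp1)
    (hflat_not : ∀ j, flat0 j ∉ Aint) (hsharp_not : ∀ j, sharp1 j ∉ Aint)
    (U : (A → ℂ) →ₗ[ℂ] (A → ℂ))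
    (hnorm : ∀ ψ : A → ℂ, Function.support ψ ⊆ (↑Aint ∪ Set.range flat0) →
      ∑' a : A, ‖U ψ a‖ ^ 2 = ∑' a : A, ‖ψ a‖ ^ 2)
    (hintertwine : ∀ ψ : A → ℂ,
      U ((↑Aint ∪ Set.range flat0 : Set A).indicator ψ) =
        (↑Aint ∪ Set.range sharp1 : Set A).indicator (U ψ))
    (ψ : A → ℂ)
    (c : ℂ) (hc : ‖c‖ = 1) (heig : U ψ = c • ψ) :
    ‖(WithLp.equiv 2 (Fin N → ℂ)).symm (fun j => ψ (flat0 j))‖ =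
      ‖(WithLp.equiv 2 (Fin N → ℂ)).symm (fun j => ψ (sharp1 j))‖ := by
  have hconserved := hnorm _ (support_indicator_subset (f := ψ))
  rw [hintertwine, heig] at hconserved
  have norm_sq_indicator (S : Set A) (φ : A → ℂ) (a : A) :
      ‖S.indicator φ a‖ ^ 2 = S.indicator (fun b => ‖φ b‖ ^ 2) a :=
    congrFun (indicator_comp_of_zero (g := fun z : ℂ => ‖z‖ ^ 2) (by simp)).symm a
  simp only [norm_sq_indicator] at hconserved
  rw [tsum_indicator_union_range Aint hsharp_inj hsharp_not,
    tsum_indicator_union_range Aint hflat_inj hflat_not] at hconserved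
  simp only [Pi.smul_apply, norm_smul, hc, one_mul, add_right_inj] at hconserved
  rw [← sq_eq_sq₀ (norm_nonneg _) (norm_nonneg _), EuclideanSpace.norm_sq_eq,
    EuclideanSpace.norm_sq_eq]
  exact hconserved.symm

/-- The scattering map is unitary. If `ψ ∈ ℓ^∞(A)` solves
`Uψ = e^{−iλ}ψ` (with `|e^{−iλ}| = 1`), then the incoming data
`α^♭ = (ψ(a_{j,0}^♭))_j` and the outgoing data `α^♯(λ) = (ψ(a_{j,1}^♯))_j`
have equal norms in `ℂᴺ`.

Here `flat0 j = a_{j,0}^♭`, `sharp1 j = a_{j,1}^♯`, `Ω^♭ = A_int ∪ ran flat0`,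
`Ω^♯ = A_int ∪ ran sharp1`; `U` preserves the `ℓ²`-norm of functions supported
in `Ω^♭` and satisfies the intertwining identity `U 1_{Ω^♭} ψ = 1_{Ω^♯} U ψ`. -/
theorem scattering_matrix_unitary
    {A : Type*} (N : ℕ) (Aint : Finset A)
    (flat0 sharp1 : Fin N → A)
    (hflat_inj : Function.Injective flat0) (hsharp_inj : Function.Injective sharp1)
    (hflat_not : ∀ j, flat0 j ∉ Aint) (hsharp_not : ∀ j, sharp1 j ∉ Aint)
    (U : (A → ℂ) →ₗ[ℂ] (A → ℂ))
    (hnorm : ∀ ψ : A → ℂ, Function.support ψ ⊆ (↑Aint ∪ Set.range flat0) →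
      ∑' a : A, ‖U ψ a‖ ^ 2 = ∑' a : A, ‖ψ a‖ ^ 2)
    (hintertwine : ∀ ψ : A → ℂ,
      U ((↑Aint ∪ Set.range flat0 : Set A).indicator ψ) =
        (↑Aint ∪ Set.range sharp1 : Set A).indicator (U ψ))
    (ψ : A → ℂ) (hψ_bdd : ∃ C : ℝ, ∀ a, ‖ψ a‖ ≤ C)
    (c : ℂ) (hc : ‖c‖ = 1) (heig : U ψ = c • ψ) :
    ‖(WithLp.equiv 2 (Fin N → ℂ)).symm (fun j => ψ (flat0 j))‖ =
      ‖(WithLp.equiv 2 (Fin N → ℂ)).symm (fun j => ψ (sharp1 j))‖ :=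
  scattering_matrix_unitary_general N Aint flat0 sharp1 hflat_inj hsharp_inj hflat_not hsharp_not U
    hnorm hintertwine ψ c hc heig
end

section
/- Let T = dSd* be the discrete Laplacian-type operator on ℓ²ₙ(V_int) where S is the edge-reversal operator. For an eigenvalue λ = e^{iθ} ∈ S¹ \ {±1} of the quantum walk, define ∂_λ* f = (√2 |sin θ|)^{−1}(1 − λS)d*f. If f, g are eigenvectors of T with eigenvalue cos θ, then ⟨∂_λ* f, ∂_λ* g⟩_{ℓ²(A_int)} = ⟨f, g⟩_{ℓ²ₙ(V_int)}; in particular ∂_λ* maps an orthonormal set of eigenvectors of T to an orthonormal set. -/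
/-- Let `T = d S d*` be the discrete Laplacian-type operator,
i.e. `T f v = n(v)⁻¹ Σ_{t(a)=v} f(t(ā))`, on the weighted space `ℓ²ₙ(V_int)`.
For `λ = e^{iθ} ∈ S¹ \ {±1}` (`sin θ ≠ 0`) define
`∂_λ* f (a) = (√2 |sin θ|)⁻¹ (f(t(a)) − e^{iθ} f(t(ā)))`, i.e.
`∂_λ* f = (√2 |sin θ|)⁻¹ (1 − λS) d* f`. If `f, g` satisfy `T f = cos θ · f`
and `T g = cos θ · g`, then
`⟨∂_λ* f, ∂_λ* g⟩_{ℓ²(A_int)} = ⟨f, g⟩_{ℓ²ₙ(V_int)}`. -/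
theorem partial_lambda_star_isometry_on_eigenspace
    {V A : Type*} [Fintype V] [Fintype A] [DecidableEq V]
    (t : A → V) (rev : A → A) (hrev : Function.Involutive rev)
    (n : V → ℕ)
    (hn : ∀ v, n v = (Finset.univ.filter fun a => t a = v).card)
    (hpos : ∀ v, 0 < n v)
    (θ : ℝ) (hθ : Real.sin θ ≠ 0)
    (f g : V → ℂ)
    (hf : ∀ v, (n v : ℂ)⁻¹ * ∑ a ∈ Finset.univ.filter (fun a => t a = v),
      f (t (rev a)) = (Real.cos θ : ℂ) * f v)
    (hg : ∀ v, (n v : ℂ)⁻¹ * ∑ a ∈ Finset.univ.filter (fun a => t a = v),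
      g (t (rev a)) = (Real.cos θ : ℂ) * g v) :
    ∑ a : A,
      (((Real.sqrt 2 * |Real.sin θ| : ℝ) : ℂ)⁻¹ *
          (f (t a) - Complex.exp (Complex.I * θ) * f (t (rev a)))) *
        (starRingEnd ℂ) (((Real.sqrt 2 * |Real.sin θ| : ℝ) : ℂ)⁻¹ *
          (g (t a) - Complex.exp (Complex.I * θ) * g (t (rev a)))) =
      ∑ v : V, (n v : ℂ) * (f v * (starRingEnd ℂ) (g v)) := by
  classical
  set r : ℝ := Real.sqrt 2 * |Real.sin θ| with hr
  set c : ℂ := ((r : ℝ) : ℂ)⁻¹ with hc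
  set lam : ℂ := Complex.exp (Complex.I * θ) with hlamdef
  set mu : ℂ := (starRingEnd ℂ) lam with hmudef
  set L : ℂ := ∑ v : V, (n v : ℂ) * (f v * (starRingEnd ℂ) (g v)) with hL
  have hnz : ∀ v, (n v : ℂ) ≠ 0 := fun v => Nat.cast_ne_zero.mpr (hpos v).ne'
  -- lam basic facts
  have hlam : lam = (Real.cos θ : ℂ) + (Real.sin θ : ℂ) * Complex.I := by
    rw [hlamdef, mul_comm, Complex.exp_mul_I, Complex.ofReal_cos, Complex.ofReal_sin]
  have hmu : mu = (Real.cos θ : ℂ) - (Real.sin θ : ℂ) * Complex.I := by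
    rw [hmudef, hlam, map_add, map_mul, Complex.conj_ofReal, Complex.conj_ofReal,
      Complex.conj_I]
    ring
  have hpyth : ((Real.sin θ : ℂ)) ^ 2 + ((Real.cos θ : ℂ)) ^ 2 = 1 := by
    have := Real.sin_sq_add_cos_sq θ
    exact_mod_cast this
  have hsum : lam + mu = 2 * (Real.cos θ : ℂ) := by rw [hlam, hmu]; ring
  have hunit : lam * mu = 1 := by
    rw [hlam, hmu]
    have : ((Real.cos θ : ℂ) + (Real.sin θ : ℂ) * Complex.I) *
        ((Real.cos θ : ℂ) - (Real.sin θ : ℂ) * Complex.I)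
        = ((Real.sin θ : ℂ)) ^ 2 + ((Real.cos θ : ℂ)) ^ 2 := by
      rw [show ((Real.sin θ : ℂ)) ^ 2 + ((Real.cos θ : ℂ)) ^ 2
          = (Real.cos θ : ℂ)^2 - (Real.sin θ : ℂ)^2 * Complex.I^2 by
            rw [Complex.I_sq]; ring]
      ring
    rw [this, hpyth]
  have hconjc : (starRingEnd ℂ) c = c := by
    rw [hc, map_inv₀, Complex.conj_ofReal]
  -- normalization
  have hr2 : ((r : ℝ) : ℂ) ^ 2 = 2 * (Real.sin θ : ℂ) ^ 2 := by
    have : r ^ 2 = 2 * Real.sin θ ^ 2 := by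
      rw [hr, mul_pow, sq_abs, Real.sq_sqrt (by norm_num : (2:ℝ) ≥ 0)]
    exact_mod_cast this
  have hrne : ((r : ℝ) : ℂ) ≠ 0 := by
    simp only [ne_eq, Complex.ofReal_eq_zero, hr]
    positivity
  have h2 : c * c * (2 - 2 * (Real.cos θ : ℂ) ^ 2) = 1 := by
    have h22 : (2 : ℂ) - 2 * (Real.cos θ : ℂ) ^ 2 = ((r : ℝ) : ℂ) ^ 2 := by
      rw [hr2]; linear_combination (-2:ℂ) * hpyth
    rw [hc, h22, sq]
    field_simp
  -- eigen equations on fibers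
  have hg' : ∀ v, ∑ a ∈ Finset.univ.filter (fun a => t a = v), g (t (rev a))
      = (n v : ℂ) * ((Real.cos θ : ℂ) * g v) := by
    intro v
    have h := congrArg (fun z => (n v : ℂ) * z) (hg v)
    simp only [← mul_assoc, mul_inv_cancel₀ (hnz v), one_mul] at h
    rw [h]
    ring
  -- fiberwise sums
  have hdiag : ∑ a : A, f (t a) * (starRingEnd ℂ) (g (t a)) = L := by
    rw [← Finset.sum_fiberwise Finset.univ t
      (fun a => f (t a) * (starRingEnd ℂ) (g (t a))), hL]
    refine Finset.sum_congr rfl fun v _ => ?_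
    rw [Finset.sum_congr rfl (fun a ha => by
      rw [(Finset.mem_filter.1 ha).2] :
      ∀ a ∈ Finset.univ.filter (fun a => t a = v), f (t a) * (starRingEnd ℂ) (g (t a))
        = f v * (starRingEnd ℂ) (g v)), Finset.sum_const, ← hn v, nsmul_eq_mul]
  have hdiag2 : ∑ a : A, f (t (rev a)) * (starRingEnd ℂ) (g (t (rev a))) = L := by
    rw [← hdiag]
    exact Fintype.sum_equiv (hrev.toPerm rev) _ _ (fun a => by
      simp [Function.Involutive.toPerm, hrev a])
  have hcross : ∑ a : A, f (t a) * (starRingEnd ℂ) (g (t (rev a)))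
      = (Real.cos θ : ℂ) * L := by
    rw [← Finset.sum_fiberwise Finset.univ t
      (fun a => f (t a) * (starRingEnd ℂ) (g (t (rev a)))), hL, Finset.mul_sum]
    refine Finset.sum_congr rfl fun v _ => ?_
    have step : ∑ a ∈ Finset.univ.filter (fun a => t a = v),
        f (t a) * (starRingEnd ℂ) (g (t (rev a)))
        = f v * (starRingEnd ℂ) (∑ a ∈ Finset.univ.filter (fun a => t a = v),
            g (t (rev a))) := by
      rw [map_sum, Finset.mul_sum]
      exact Finset.sum_congr rfl fun a ha => by rw [(Finset.mem_filter.1 ha).2]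
    rw [step, hg' v]
    simp only [map_mul, map_natCast, Complex.conj_ofReal]
    ring
  have hcross2 : ∑ a : A, f (t (rev a)) * (starRingEnd ℂ) (g (t a))
      = (Real.cos θ : ℂ) * L := by
    rw [← hcross]
    exact Fintype.sum_equiv (hrev.toPerm rev) _ _ (fun a => by
      simp [Function.Involutive.toPerm, hrev a])
  -- main computation
  have expand : ∀ a : A,
      (c * (f (t a) - lam * f (t (rev a)))) *
        (starRingEnd ℂ) (c * (g (t a) - lam * g (t (rev a))))
      = c * c * ((f (t a) * (starRingEnd ℂ) (g (t a))
          + (lam * mu) * (f (t (rev a)) * (starRingEnd ℂ) (g (t (rev a))))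
          - mu * (f (t a) * (starRingEnd ℂ) (g (t (rev a))))
          - lam * (f (t (rev a)) * (starRingEnd ℂ) (g (t a))))) := by
    intro a
    rw [map_mul, map_sub, map_mul, hconjc, hmudef]
    ring
  calc ∑ a : A,
      (c * (f (t a) - lam * f (t (rev a)))) *
        (starRingEnd ℂ) (c * (g (t a) - lam * g (t (rev a))))
      = c * c * ((∑ a : A, f (t a) * (starRingEnd ℂ) (g (t a)))
          + (lam * mu) * (∑ a : A, f (t (rev a)) * (starRingEnd ℂ) (g (t (rev a))))
          - mu * (∑ a : A, f (t a) * (starRingEnd ℂ) (g (t (rev a))))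
          - lam * (∑ a : A, f (t (rev a)) * (starRingEnd ℂ) (g (t a)))) := by
        rw [Finset.sum_congr rfl fun a _ => expand a, Finset.mul_sum, Finset.mul_sum,
          Finset.mul_sum, ← Finset.sum_add_distrib, ← Finset.sum_sub_distrib,
          ← Finset.sum_sub_distrib, Finset.mul_sum]
    _ = c * c * ((L + (lam * mu) * L
          - mu * ((Real.cos θ : ℂ) * L) - lam * ((Real.cos θ : ℂ) * L))) := by
        rw [hdiag, hdiag2, hcross, hcross2]
    _ = L := by
        linear_combination (c * c * L) * hunit
          + (-(c * c * L * (Real.cos θ : ℂ))) * hsum + L * h2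
end
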